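/- arXiv:2310.03124 — 3 statements merged into one kernel-verified Lean document; each statement's English description precedes it below -/
import Mathlib

section
/- (Theorem 3.1, Part I) If the reward function f satisfies (A1) and (A2) with some exponent γ > 0, then for every starting point (x1, x2) ∈ ℝ² there exist infinitely many Nash equilibria (τ1, τ2) of the two-player stopping game in which both players receive infinite expected payoffs, i.e., J_1(τ1, τ2, x1, x2) = ∞ and J_2(τ2, τ1, x1, x2) = ∞. -/
open MeasureTheory ProbabilityTheory Filter Set
open scoped ENNReal Classical

noncomputable section

namespace DynkinGame

variable {Ω : Type*} [MeasurableSpace Ω]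

/-- The σ-algebra generated by the process `W` up to time `t` (natural filtration). -/
def natFilt (W : ℝ → Ω → ℝ) (t : ℝ) : MeasurableSpace Ω :=
  ⨆ s ∈ Set.Icc (0 : ℝ) t, MeasurableSpace.comap (W s) inferInstance

/-- The σ-algebra generated by the whole process `W`. -/
def processSigma (W : ℝ → Ω → ℝ) : MeasurableSpace Ω :=
  ⨆ s ∈ Set.Ici (0 : ℝ), MeasurableSpace.comap (W s) inferInstance

/-- `W` is a standard Brownian motion started at `0` under `P`:
measurable marginals, `W 0 = 0`, a.s. continuous paths, Gaussian increments
`W t - W s ∼ N(0, t - s)`, and increments independent of the past. -/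
structure IsBM (P : Measure Ω) (W : ℝ → Ω → ℝ) : Prop where
  meas : ∀ t, Measurable (W t)
  init : ∀ ω, W 0 ω = 0
  cont : ∀ᵐ ω ∂P, Continuous fun t => W t ω
  incr : ∀ s t : ℝ, 0 ≤ s → s ≤ t →
    Measure.map (fun ω => W t ω - W s ω) P = gaussianReal 0 (Real.toNNReal (t - s))
  indep_incr : ∀ s t : ℝ, 0 ≤ s → s ≤ t →
    Indep (MeasurableSpace.comap (fun ω => W t ω - W s ω) inferInstance) (natFilt W s) P

/-- `τ`, with values in `[0, ∞]`, is a stopping time for the natural filtration of `W`. -/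
def IsStopTime (W : ℝ → Ω → ℝ) (τ : Ω → ℝ≥0∞) : Prop :=
  ∀ t : ℝ, 0 ≤ t → MeasurableSet[natFilt W t] {ω | τ ω ≤ ENNReal.ofReal t}

/-- The value of the process at the (possibly infinite) random time `τ`
(irrelevant junk value `W 0 ω` on `{τ = ∞}`). -/
def stopVal (W : ℝ → Ω → ℝ) (τ : Ω → ℝ≥0∞) (ω : Ω) : ℝ :=
  W (τ ω).toReal ω

/-- Extended-real expectation `E[X] = E[X⁺] - E[X⁻]`. -/
def EE (P : Measure Ω) (X : Ω → ℝ) : EReal :=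
  ((∫⁻ ω, ENNReal.ofReal (X ω) ∂P : ℝ≥0∞) : EReal)
    - ((∫⁻ ω, ENNReal.ofReal (-X ω) ∂P : ℝ≥0∞) : EReal)

/-- `E[X]` is well defined (not of the form `∞ - ∞`). -/
def WellDef (P : Measure Ω) (X : Ω → ℝ) : Prop :=
  (∫⁻ ω, ENNReal.ofReal (X ω) ∂P) ≠ ⊤ ∨ (∫⁻ ω, ENNReal.ofReal (-X ω) ∂P) ≠ ⊤

/-- Admissible strategies of a player observing `W` with starting point `x`:
stopping times of `W` for which `E[f(x + W_τ)]` is well defined. -/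
def Adm (P : Measure Ω) (f : ℝ → ℝ) (x : ℝ) (W : ℝ → Ω → ℝ) (τ : Ω → ℝ≥0∞) : Prop :=
  IsStopTime W τ ∧ WellDef P fun ω => f (x + stopVal W τ ω)

/-- The pathwise payoff `f(x + W_τ) (1_{τ < σ} + (1/2) 1_{τ = σ < ∞})` of a player stopping
at `τ` when the opponent stops at `σ`. -/
def payoff (f : ℝ → ℝ) (x : ℝ) (W : ℝ → Ω → ℝ) (τ σ : Ω → ℝ≥0∞) (ω : Ω) : ℝ :=
  f (x + stopVal W τ ω) *
    ((if τ ω < σ ω then 1 else 0) + (if τ ω = σ ω ∧ τ ω ≠ ⊤ then (1 : ℝ) / 2 else 0))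

/-- The expected payoff of a player using `τ` against `σ`. -/
def J (P : Measure Ω) (f : ℝ → ℝ) (x : ℝ) (W : ℝ → Ω → ℝ) (τ σ : Ω → ℝ≥0∞) : EReal :=
  EE P (payoff f x W τ σ)

/-- Nash equilibrium of the two-player stopping game started at `(x₁, x₂)`. -/
def Nash (P : Measure Ω) (f : ℝ → ℝ) (x₁ x₂ : ℝ) (W₁ W₂ : ℝ → Ω → ℝ)
    (τ₁ τ₂ : Ω → ℝ≥0∞) : Prop :=
  Adm P f x₁ W₁ τ₁ ∧ Adm P f x₂ W₂ τ₂ ∧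
  (∀ σ, Adm P f x₁ W₁ σ → J P f x₁ W₁ σ τ₂ ≤ J P f x₁ W₁ τ₁ τ₂) ∧
  (∀ σ, Adm P f x₂ W₂ σ → J P f x₂ W₂ σ τ₁ ≤ J P f x₂ W₂ τ₂ τ₁)

/-- The discount function `c(t) = P(σ > t) + (1/2) P(σ = t < ∞)`, `c(∞) = 0`, induced by the
opponent's stopping time `σ`. -/
def disc (P : Measure Ω) (σ : Ω → ℝ≥0∞) (t : ℝ≥0∞) : ℝ :=
  if t = ⊤ then 0
  else (P {ω | t < σ ω}).toReal + (1 / 2) * (P {ω | σ ω = t}).toReal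

/-- The full two-player setup: a probability measure carrying two independent standard
Brownian motions started at `0`. -/
structure Setup (P : Measure Ω) (W₁ W₂ : ℝ → Ω → ℝ) : Prop where
  prob : IsProbabilityMeasure P
  bm₁ : IsBM P W₁
  bm₂ : IsBM P W₂
  indep : Indep (processSigma W₁) (processSigma W₂) P

/-- Assumption (A1): `f < 0` on `(-∞, 0)` and `f ≥ 0` on `[0, ∞)`. -/
def A1 (f : ℝ → ℝ) : Prop :=
  (∀ x < (0 : ℝ), f x < 0) ∧ ∀ x ≥ (0 : ℝ), 0 ≤ f x

/-- Assumption (A2) with exponent `γ`: `liminf_{x → ∞} f x / x ^ γ > 0`. -/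
def A2 (f : ℝ → ℝ) (γ : ℝ) : Prop :=
  0 < liminf (fun x : ℝ => f x / x ^ γ) atTop

/-- An extended-real payoff value is finite. -/
def FiniteP (v : EReal) : Prop := v ≠ ⊤ ∧ v ≠ ⊥

/-- First nonnegative time at which the (time-dependent) property `A` holds, as an
`ℝ≥0∞`-valued random time (`∞` if it never holds). -/
def hitTime (A : ℝ → Ω → Prop) (ω : Ω) : ℝ≥0∞ :=
  sInf (ENNReal.ofReal '' {t : ℝ | 0 ≤ t ∧ A t ω})

/-- The first time after the hitting time of the origin at which `x + W` lies above the
square-root boundary `a √(s - σ + 1)`, where `σ` is the hitting time of the origin. -/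
def sqrtBdryTime (W : ℝ → Ω → ℝ) (x a : ℝ) (ω : Ω) : ℝ≥0∞ :=
  sInf (ENNReal.ofReal ''
    {s : ℝ | 0 ≤ s ∧ hitTime (fun t ω' => x + W t ω' = 0) ω ≤ ENNReal.ofReal s ∧
      a * Real.sqrt (s - (hitTime (fun t ω' => x + W t ω' = 0) ω).toReal + 1) ≤ x + W s ω})

end DynkinGame

/-! Each player stops at the first point `t` of a geometric grid `{R ^ k}` at which
`x + W_t ≥ √t`. By independence of Brownian increments, the event that player 1 stops at
`R ^ (k + 1)` while `x₂ + W⁽²⁾` has stayed in `[0, √t)` at the grid points up to that time has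
probability at least `c q ^ (2k + 1)`, with `q` a fixed Gaussian probability, and on it (A2) gives
player 1 a reward of at least `C (√R ^ γ) ^ (k + 1)`. Once `√R ^ γ q² ≥ 1` these contributions of
disjoint events do not decay, so the expected payoff is infinite, while (A1) makes the payoff
nonnegative. An infinite payoff admits no profitable deviation, and different `R` give different
strategies. -/

namespace DynkinGame

open Function Topology

theorem A2.exists_const_mul_rpow_le {f : ℝ → ℝ} {γ : ℝ} (h : A2 f γ) :
    ∃ C > 0, ∃ M, ∀ y ≥ M, C * y ^ γ ≤ f y := by
  -- Otherwise every `a` with `∀ᶠ y, a ≤ f y / y ^ γ` is `≤ 0`, so the liminf (their `sSup`) is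
  -- `≤ 0`; this includes the case that there is no such `a`, as `sSup ∅ = 0` in `ℝ`.
  obtain ⟨C, hC, hev⟩ : ∃ C > 0, ∀ᶠ y in atTop, C ≤ f y / y ^ γ := by
    by_contra! hc
    refine (not_lt.mpr ?_) h
    rw [liminf_eq]
    exact Real.sSup_le
      (fun a ha => not_lt.mp fun ha0 => hc a ha0 (ha.mono fun _ => not_lt.mpr)) le_rfl
  obtain ⟨M, hM⟩ := eventually_atTop.mp (hev.and (eventually_gt_atTop 0))
  exact ⟨C, hC, M, fun y hy => (le_div_iff₀ (Real.rpow_pos_of_pos (hM y hy).2 γ)).mp (hM y hy).1⟩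

theorem eventually_one_le_ofReal_sqrt_rpow_mul {γ : ℝ} (hγ : 0 < γ) {c : ℝ≥0∞} (hc : c ≠ 0) :
    ∀ᶠ R in atTop, 1 ≤ ENNReal.ofReal (√R ^ γ) * c := by
  have h : Tendsto (fun R => ENNReal.ofReal (√R ^ γ) * c) atTop (𝓝 (⊤ * c)) :=
    ENNReal.Tendsto.mul_const (ENNReal.tendsto_ofReal_atTop.comp
      ((tendsto_rpow_atTop hγ).comp Real.tendsto_sqrt_atTop)) (Or.inl ENNReal.top_ne_zero)
  rw [ENNReal.top_mul hc] at h
  exact h.eventually_const_le ENNReal.one_lt_top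

theorem lintegral_eq_top_of_eventually_le_setLIntegral {α : Type*} [MeasurableSpace α]
    {μ : Measure α} {g : α → ℝ≥0∞} {E : ℕ → Set α} (hE : ∀ k, MeasurableSet (E k))
    (hdisj : Pairwise (Disjoint on E)) {ε : ℝ≥0∞} (hε : ε ≠ 0)
    (h : ∀ᶠ k in atTop, ε ≤ ∫⁻ a in E k, g a ∂μ) : ∫⁻ a, g a ∂μ = ⊤ := by
  obtain ⟨k₀, hk₀⟩ := eventually_atTop.mp h
  refine top_le_iff.mp ?_
  calc ⊤ = ∑' _ : ℕ, ε := (ENNReal.tsum_const_eq_top_of_ne_zero hε).symm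
    _ ≤ ∑' k, ∫⁻ a in E (k + k₀), g a ∂μ :=
        ENNReal.tsum_le_tsum fun k => hk₀ _ (Nat.le_add_left _ _)
    _ ≤ ∑' k, ∫⁻ a in E k, g a ∂μ :=
        ENNReal.tsum_comp_le_tsum_of_injective (add_left_injective k₀) _
    _ = ∫⁻ a in ⋃ k, E k, g a ∂μ := (lintegral_iUnion hE hdisj g).symm
    _ ≤ ∫⁻ a, g a ∂μ := setLIntegral_le_lintegral _ _

theorem gaussianReal_pos {s : Set ℝ} (hs : volume s ≠ 0) : 0 < gaussianReal 0 1 s :=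
  pos_iff_ne_zero.mpr fun h => hs (gaussianReal_absolutelyContinuous' 0 one_ne_zero h)

section Strategies

variable {Ω : Type*}

section Filtration

variable {W : ℝ → Ω → ℝ}

theorem natFilt_mono {s t : ℝ} (hst : s ≤ t) : natFilt W s ≤ natFilt W t :=
  biSup_mono fun _ hu => Icc_subset_Icc_right hst hu

theorem natFilt_le_processSigma (t : ℝ) : natFilt W t ≤ processSigma W :=
  biSup_mono fun _ hu => hu.1

theorem measurableSet_natFilt_preimage {t : ℝ} (ht : 0 ≤ t) {B : Set ℝ}
    (hB : MeasurableSet B) : MeasurableSet[natFilt W t] (W t ⁻¹' B) := by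
  have h : MeasurableSpace.comap (W t) inferInstance ≤ natFilt W t :=
    le_biSup (fun u => MeasurableSpace.comap (W u) inferInstance) ⟨ht, le_rfl⟩
  exact h _ ⟨B, hB, rfl⟩

end Filtration

section GridStop

variable (W : ℝ → Ω → ℝ) (x R : ℝ)

def aboveSet (k : ℕ) : Set Ω := {ω | √R ^ k ≤ x + W (R ^ k) ω}

def belowSet (k : ℕ) : Set Ω := {ω | 0 ≤ x + W (R ^ k) ω ∧ x + W (R ^ k) ω < √R ^ k}

def staysBelow (k : ℕ) : Set Ω := ⋂ j ≤ k, belowSet W x R j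

def firstAbove (k : ℕ) : Set Ω := aboveSet W x R k \ ⋃ j < k, aboveSet W x R j

def gridStop (ω : Ω) : ℝ≥0∞ :=
  if h : ∃ k, ω ∈ aboveSet W x R k then ENNReal.ofReal (R ^ Nat.find h) else ⊤

variable {W x R} {W₁ W₂ : ℝ → Ω → ℝ} {x₁ x₂ : ℝ}

theorem pairwise_disjoint_firstAbove : Pairwise (Disjoint on firstAbove W x R) := by
  intro j k hjk
  rcases hjk.lt_or_gt with h | h
  · exact disjoint_left.mpr fun ω hj hk => hk.2 (mem_biUnion h hj.1)
  · exact disjoint_left.mpr fun ω hj hk => hj.2 (mem_biUnion h hk.1)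

theorem staysBelow_inter_aboveSet_subset (k : ℕ) :
    staysBelow W x R k ∩ aboveSet W x R (k + 1) ⊆ firstAbove W x R (k + 1) := by
  rintro ω ⟨hbelow, habove⟩
  refine ⟨habove, fun hω => ?_⟩
  obtain ⟨j, hj, hj'⟩ := mem_iUnion₂.mp hω
  exact not_lt.mpr hj' (mem_iInter₂.mp hbelow j (Nat.lt_succ_iff.mp hj)).2

theorem gridStop_of_mem_firstAbove {k : ℕ} {ω : Ω} (hω : ω ∈ firstAbove W x R k) :
    gridStop W x R ω = ENNReal.ofReal (R ^ k) := by
  have h : ∃ k, ω ∈ aboveSet W x R k := ⟨k, hω.1⟩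
  have hk : Nat.find h = k :=
    (Nat.find_eq_iff h).mpr ⟨hω.1, fun j hj hj' => hω.2 (mem_biUnion hj hj')⟩
  rw [gridStop, dif_pos h, hk]

theorem gridStop_eq_top_or_mem_firstAbove (ω : Ω) :
    gridStop W x R ω = ⊤ ∨ ∃ k, ω ∈ firstAbove W x R k := by
  by_cases h : ∃ k, ω ∈ aboveSet W x R k
  · exact Or.inr ⟨Nat.find h, Nat.find_spec h, fun hω =>
      let ⟨_, hj, hj'⟩ := mem_iUnion₂.mp hω; Nat.find_min h hj hj'⟩
  · exact Or.inl (dif_neg h)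

theorem lt_gridStop_of_mem_staysBelow (hR : 1 < R) {k : ℕ} {ω : Ω}
    (hω : ω ∈ staysBelow W x R k) : ENNReal.ofReal (R ^ k) < gridStop W x R ω := by
  rcases gridStop_eq_top_or_mem_firstAbove (W := W) (x := x) (R := R) ω with h | ⟨m, hm⟩
  · rw [h]
    exact ENNReal.ofReal_lt_top
  · have hkm : k < m := not_le.mp fun hmk =>
      not_lt.mpr hm.1 (mem_iInter₂.mp hω m hmk).2
    rw [gridStop_of_mem_firstAbove hm]
    exact (ENNReal.ofReal_lt_ofReal_iff (by positivity)).mpr (pow_lt_pow_right₀ hR hkm)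

theorem stopVal_gridStop_of_mem_firstAbove (hR : 0 ≤ R) {k : ℕ} {ω : Ω}
    (hω : ω ∈ firstAbove W x R k) : stopVal W (gridStop W x R) ω = W (R ^ k) ω := by
  rw [stopVal, gridStop_of_mem_firstAbove hω, ENNReal.toReal_ofReal (pow_nonneg hR k)]

theorem gridStop_ne_gridStop (hR : 1 < R) {R' : ℝ} (hRR' : R < R') {ω : Ω}
    (hω : ω ∈ firstAbove W x R 1) : gridStop W x R ≠ gridStop W x R' := by
  intro h
  have hR' : 1 < R' := hR.trans hRR'
  have hval : gridStop W x R' ω = ENNReal.ofReal R := by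
    rw [← h, gridStop_of_mem_firstAbove hω, pow_one]
  rcases gridStop_eq_top_or_mem_firstAbove (W := W) (x := x) (R := R') ω with htop | ⟨k, hk⟩
  · exact ENNReal.ofReal_ne_top (hval ▸ htop)
  · rw [gridStop_of_mem_firstAbove hk] at hval
    have hk' : R' ^ k = R :=
      (ENNReal.ofReal_eq_ofReal_iff (pow_nonneg (by linarith) k) (by linarith)).mp hval
    rcases k with _ | k
    · linarith [pow_zero R']
    · linarith [le_self_pow₀ hR'.le (n := k + 1) (by omega)]

theorem add_W_pow_succ (hR : 1 < R) (k : ℕ) (ω : Ω) :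
    x + W (R ^ (k + 1)) ω = x + W (R ^ k) ω +
      √R ^ k * √(R - 1) * ((W (R ^ (k + 1)) ω - W (R ^ k) ω) / √(R ^ (k + 1) - R ^ k)) := by
  have hd : √(R ^ (k + 1) - R ^ k) = √R ^ k * √(R - 1) := by
    rw [← Real.sqrt_sq (pow_nonneg (Real.sqrt_nonneg R) k), ← Real.sqrt_mul (sq_nonneg _),
      ← pow_mul, mul_comm k, pow_mul, Real.sq_sqrt (by linarith)]
    ring_nf
  have hpos : 0 < √R ^ k * √(R - 1) :=
    mul_pos (pow_pos (Real.sqrt_pos.mpr (by linarith)) k) (Real.sqrt_pos.mpr (by linarith))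
  rw [hd, mul_div_cancel₀ _ hpos.ne']
  ring

theorem measurableSet_aboveSet (hR : 0 ≤ R) (k : ℕ) :
    MeasurableSet[natFilt W (R ^ k)] (aboveSet W x R k) :=
  measurableSet_natFilt_preimage (pow_nonneg hR k)
    (measurableSet_le measurable_const (measurable_const.add measurable_id))

theorem measurableSet_belowSet (hR : 0 ≤ R) (k : ℕ) :
    MeasurableSet[natFilt W (R ^ k)] (belowSet W x R k) :=
  measurableSet_natFilt_preimage (pow_nonneg hR k)
    ((measurableSet_le measurable_const (measurable_const.add measurable_id)).inter
      (measurableSet_lt (measurable_const.add measurable_id) measurable_const))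

theorem measurableSet_staysBelow (hR : 1 ≤ R) (k : ℕ) :
    MeasurableSet[natFilt W (R ^ k)] (staysBelow W x R k) :=
  .iInter fun j => .iInter fun hj =>
    natFilt_mono (pow_le_pow_right₀ hR hj) _ (measurableSet_belowSet (by linarith) j)

theorem measurableSet_firstAbove (hR : 1 ≤ R) (k : ℕ) :
    MeasurableSet[natFilt W (R ^ k)] (firstAbove W x R k) :=
  (measurableSet_aboveSet (by linarith) k).diff <| .iUnion fun j => .iUnion fun hj =>
    natFilt_mono (pow_le_pow_right₀ hR hj.le) _ (measurableSet_aboveSet (by linarith) j)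

theorem isStopTime_gridStop (hR : 1 ≤ R) : IsStopTime W (gridStop W x R) := by
  intro t ht
  have hset : {ω | gridStop W x R ω ≤ ENNReal.ofReal t} =
      ⋃ k, ⋃ (_ : R ^ k ≤ t), firstAbove W x R k := by
    ext ω
    simp only [mem_ofPred_eq, mem_iUnion, exists_prop]
    constructor
    · intro hle
      rcases gridStop_eq_top_or_mem_firstAbove (W := W) (x := x) (R := R) ω with h | ⟨k, hk⟩
      · exact absurd (h ▸ hle) (not_le.mpr ENNReal.ofReal_lt_top)
      · rw [gridStop_of_mem_firstAbove hk, ENNReal.ofReal_le_ofReal_iff ht] at hle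
        exact ⟨k, hle, hk⟩
    · rintro ⟨k, hkt, hk⟩
      rw [gridStop_of_mem_firstAbove hk]
      exact ENNReal.ofReal_le_ofReal hkt
  rw [hset]
  exact .iUnion fun k => .iUnion fun hk => natFilt_mono hk _ (measurableSet_firstAbove hR k)

theorem nonneg_add_stopVal_gridStop (hR : 0 ≤ R) {k : ℕ} {ω : Ω}
    (hω : ω ∈ firstAbove W x R k) : 0 ≤ x + stopVal W (gridStop W x R) ω := by
  rw [stopVal_gridStop_of_mem_firstAbove hR hω]
  exact (pow_nonneg (Real.sqrt_nonneg R) k).trans hω.1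

theorem payoff_gridStop_nonneg {f : ℝ → ℝ} (hA1 : A1 f) (hR : 0 ≤ R) (σ : Ω → ℝ≥0∞)
    (ω : Ω) : 0 ≤ payoff f x W (gridStop W x R) σ ω := by
  rcases gridStop_eq_top_or_mem_firstAbove (W := W) (x := x) (R := R) ω with h | ⟨k, hk⟩
  · simp [payoff, h]
  · refine mul_nonneg (hA1.2 _ (nonneg_add_stopVal_gridStop hR hk)) ?_
    split_ifs <;> norm_num

theorem le_payoff_gridStop (hR : 1 < R) {f : ℝ → ℝ} {C γ M : ℝ} (hC : 0 ≤ C) (hγ : 0 ≤ γ)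
    (hfC : ∀ y ≥ M, C * y ^ γ ≤ f y) {k : ℕ} (hM : M ≤ √R ^ k) {ω : Ω}
    (hω : ω ∈ firstAbove W₁ x₁ R k ∩ staysBelow W₂ x₂ R k) :
    C * (√R ^ γ) ^ k ≤ payoff f x₁ W₁ (gridStop W₁ x₁ R) (gridStop W₂ x₂ R) ω := by
  have hlt : gridStop W₁ x₁ R ω < gridStop W₂ x₂ R ω :=
    (gridStop_of_mem_firstAbove hω.1).trans_lt (lt_gridStop_of_mem_staysBelow hR hω.2)
  have hY : √R ^ k ≤ x₁ + W₁ (R ^ k) ω := hω.1.1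
  rw [payoff, if_pos hlt, if_neg fun h => hlt.ne h.1, add_zero, mul_one,
    stopVal_gridStop_of_mem_firstAbove (by linarith) hω.1,
    Real.rpow_pow_comm (Real.sqrt_nonneg R)]
  calc C * (√R ^ k) ^ γ ≤ C * (x₁ + W₁ (R ^ k) ω) ^ γ := by gcongr
    _ ≤ f (x₁ + W₁ (R ^ k) ω) := hfC _ (hM.trans hY)

end GridStop

variable [MeasurableSpace Ω] {P : Measure Ω} {W W₁ W₂ : ℝ → Ω → ℝ} {x x₁ x₂ R : ℝ}

theorem processSigma_le (hW : ∀ t, Measurable (W t)) : processSigma W ≤ ‹MeasurableSpace Ω› :=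
  iSup₂_le fun t _ => (hW t).comap_le

theorem EE_eq_top_of_nonneg {X : Ω → ℝ} (h0 : ∀ ω, 0 ≤ X ω)
    (htop : ∫⁻ ω, ENNReal.ofReal (X ω) ∂P = ⊤) : EE P X = ⊤ := by
  have hneg : ∫⁻ ω, ENNReal.ofReal (-X ω) ∂P = 0 := by
    simp [ENNReal.ofReal_eq_zero.mpr (neg_nonpos.mpr (h0 _))]
  simp [EE, htop, hneg]

theorem nash_of_J_eq_top {f : ℝ → ℝ} {τ₁ τ₂ : Ω → ℝ≥0∞}
    (h₁ : Adm P f x₁ W₁ τ₁) (h₂ : Adm P f x₂ W₂ τ₂) (hJ₁ : J P f x₁ W₁ τ₁ τ₂ = ⊤)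
    (hJ₂ : J P f x₂ W₂ τ₂ τ₁ = ⊤) : Nash P f x₁ x₂ W₁ W₂ τ₁ τ₂ :=
  ⟨h₁, h₂, fun _ _ => hJ₁ ▸ le_top, fun _ _ => hJ₂ ▸ le_top⟩

theorem adm_gridStop [IsFiniteMeasure P]
    (hW₀ : ∀ ω, W 0 ω = 0) {f : ℝ → ℝ} (hA1 : A1 f) (hR : 1 ≤ R) :
    Adm P f x W (gridStop W x R) := by
  refine ⟨isStopTime_gridStop hR, Or.inr ?_⟩
  have hbound : ∀ ω, ENNReal.ofReal (-f (x + stopVal W (gridStop W x R) ω)) ≤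
      ENNReal.ofReal (-f x) := by
    intro ω
    rcases gridStop_eq_top_or_mem_firstAbove (W := W) (x := x) (R := R) ω with h | ⟨k, hk⟩
    · rw [stopVal, h, ENNReal.toReal_top, hW₀, add_zero]
    · have hf := hA1.2 _ (nonneg_add_stopVal_gridStop (by linarith) hk)
      rw [ENNReal.ofReal_eq_zero.mpr (neg_nonpos.mpr hf)]
      exact zero_le
  refine ne_top_of_le_ne_top ?_ ((lintegral_mono hbound).trans_eq (lintegral_const _))
  exact ENNReal.mul_ne_top ENNReal.ofReal_ne_top (measure_ne_top P univ)

theorem IsBM.map_normalized_incr (hW : IsBM P W) {s t : ℝ} (hs : 0 ≤ s) (hst : s < t) :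
    P.map (fun ω => (W t ω - W s ω) / √(t - s)) = gaussianReal 0 1 := by
  have hpos : 0 < t - s := sub_pos.mpr hst
  have hΔ : Measurable fun ω => W t ω - W s ω := (hW.meas t).sub (hW.meas s)
  calc P.map (fun ω => (W t ω - W s ω) / √(t - s))
      = (P.map fun ω => W t ω - W s ω).map (· / √(t - s)) :=
        (Measure.map_map (measurable_div_const _) hΔ).symm
    _ = gaussianReal 0 1 := by
        rw [hW.incr s t hs hst.le, gaussianReal_map_div_const]
        congr 1
        · simp
        · ext
          simp [Real.sq_sqrt hpos.le, Real.coe_toNNReal _ hpos.le, hpos.ne']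

theorem IsBM.measure_normalized_incr_mem (hW : IsBM P W) {s t : ℝ} (hs : 0 ≤ s) (hst : s < t)
    {S : Set ℝ} (hS : MeasurableSet S) :
    P {ω | (W t ω - W s ω) / √(t - s) ∈ S} = gaussianReal 0 1 S := by
  rw [← hW.map_normalized_incr hs hst, Measure.map_apply _ hS]
  · rfl
  · exact ((hW.meas t).sub (hW.meas s)).div_const _

theorem IsBM.measure_normalized_incr_mem_inter (hW : IsBM P W) {s t : ℝ} (hs : 0 ≤ s)
    (hst : s < t) {S : Set ℝ} (hS : MeasurableSet S) {A : Set Ω}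
    (hA : MeasurableSet[natFilt W s] A) :
    P ({ω | (W t ω - W s ω) / √(t - s) ∈ S} ∩ A) = gaussianReal 0 1 S * P A := by
  have hU : MeasurableSet[MeasurableSpace.comap (fun ω => W t ω - W s ω) inferInstance]
      {ω | (W t ω - W s ω) / √(t - s) ∈ S} :=
    ⟨(· / √(t - s)) ⁻¹' S, measurable_div_const _ hS, rfl⟩
  rw [((hW.indep_incr s t hs hst.le).indepSet_of_measurableSet hU hA).measure_inter_eq_mul,
    hW.measure_normalized_incr_mem hs hst hS]

-- For `R ≥ 4`, a normalized increment in `[0, 1/2]` keeps `x + W` below the boundary `√t` on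
-- the next grid step, and one in `[2, ∞)` lifts it above.
def stayProb : ℝ≥0∞ := gaussianReal 0 1 (Icc 0 (1 / 2))

def crossProb : ℝ≥0∞ := gaussianReal 0 1 (Ici 2)

def startProb (x : ℝ) : ℝ≥0∞ := gaussianReal 0 1 (Ico (-x) (1 - x))

theorem stayProb_pos : 0 < stayProb := gaussianReal_pos (by simp)

theorem crossProb_pos : 0 < crossProb := gaussianReal_pos (by simp)

theorem startProb_pos (x : ℝ) : 0 < startProb x := gaussianReal_pos (by simp)

theorem startProb_le_measure_staysBelow_zero (hW : IsBM P W) :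
    startProb x ≤ P (staysBelow W x R 0) := by
  rw [startProb, ← hW.measure_normalized_incr_mem le_rfl one_pos measurableSet_Ico]
  refine measure_mono fun ω hω => mem_iInter₂.mpr fun j hj => ?_
  obtain ⟨h0, h1⟩ := hω
  rw [Nat.le_zero.mp hj]
  simp only [sub_zero, Real.sqrt_one, div_one, hW.init] at h0 h1
  simp only [belowSet, mem_ofPred_eq, pow_zero]
  constructor <;> linarith

theorem stayProb_mul_le_measure_staysBelow_succ (hW : IsBM P W) (hR : 4 ≤ R) (k : ℕ) :
    stayProb * P (staysBelow W x R k) ≤ P (staysBelow W x R (k + 1)) := by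
  have hsqrt : 2 ≤ √R := (Real.le_sqrt zero_le_two (by linarith)).mpr (by linarith)
  have hsub : √(R - 1) ≤ √R := Real.sqrt_le_sqrt (by linarith)
  rw [stayProb, ← hW.measure_normalized_incr_mem_inter (pow_nonneg (by linarith) k)
    (pow_lt_pow_right₀ (by linarith) k.lt_succ_self) measurableSet_Icc
    (measurableSet_staysBelow (by linarith) k)]
  refine measure_mono fun ω ⟨⟨hZ0, hZ1⟩, hω⟩ => mem_iInter₂.mpr fun j hj => ?_
  rcases Nat.lt_or_eq_of_le hj with hjk | rfl
  · exact mem_iInter₂.mp hω j (Nat.lt_succ_iff.mp hjk)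
  obtain ⟨h0, h1⟩ := mem_iInter₂.mp hω k le_rfl
  have ha : 0 ≤ √R ^ k := pow_nonneg (Real.sqrt_nonneg R) k
  have hb : 0 ≤ √(R - 1) := Real.sqrt_nonneg _
  refine ⟨?_, ?_⟩ <;> rw [add_W_pow_succ (by linarith) k ω]
  · positivity
  · rw [pow_succ √R]
    nlinarith [mul_nonneg (mul_nonneg ha hb) (sub_nonneg.mpr hZ1), mul_nonneg ha hb,
      mul_le_mul_of_nonneg_left hsub ha]

theorem crossProb_mul_le_measure_firstAbove_succ (hW : IsBM P W) (hR : 4 ≤ R) (k : ℕ) :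
    crossProb * P (staysBelow W x R k) ≤ P (firstAbove W x R (k + 1)) := by
  have hsqrt : √R ≤ 2 * √(R - 1) := by
    nlinarith [Real.sq_sqrt (show 0 ≤ R by linarith), Real.sq_sqrt (show 0 ≤ R - 1 by linarith),
      Real.sqrt_nonneg R, Real.sqrt_nonneg (R - 1)]
  rw [crossProb, ← hW.measure_normalized_incr_mem_inter (pow_nonneg (by linarith) k)
    (pow_lt_pow_right₀ (by linarith) k.lt_succ_self) measurableSet_Ici
    (measurableSet_staysBelow (by linarith) k)]
  refine measure_mono fun ω ⟨hZ, hω⟩ => staysBelow_inter_aboveSet_subset k ⟨hω, ?_⟩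
  have hZ : 2 ≤ (W (R ^ (k + 1)) ω - W (R ^ k) ω) / √(R ^ (k + 1) - R ^ k) := hZ
  obtain ⟨h0, -⟩ := mem_iInter₂.mp hω k le_rfl
  have ha : 0 ≤ √R ^ k := pow_nonneg (Real.sqrt_nonneg R) k
  have hb : 0 ≤ √(R - 1) := Real.sqrt_nonneg _
  show √R ^ (k + 1) ≤ x + W (R ^ (k + 1)) ω
  rw [add_W_pow_succ (by linarith) k ω, pow_succ √R]
  nlinarith [mul_nonneg (mul_nonneg ha hb) (sub_nonneg.mpr hZ),
    mul_le_mul_of_nonneg_left hsqrt ha]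

theorem measure_staysBelow_ge (hW : IsBM P W) (hR : 4 ≤ R) (k : ℕ) :
    startProb x * stayProb ^ k ≤ P (staysBelow W x R k) := by
  induction k with
  | zero => simpa using startProb_le_measure_staysBelow_zero hW
  | succ k ih =>
    calc startProb x * stayProb ^ (k + 1) = stayProb * (startProb x * stayProb ^ k) := by ring
      _ ≤ stayProb * P (staysBelow W x R k) := by gcongr
      _ ≤ P (staysBelow W x R (k + 1)) := stayProb_mul_le_measure_staysBelow_succ hW hR k

theorem measure_firstAbove_succ_ge (hW : IsBM P W) (hR : 4 ≤ R) (k : ℕ) :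
    crossProb * (startProb x * stayProb ^ k) ≤ P (firstAbove W x R (k + 1)) :=
  (mul_le_mul_right (measure_staysBelow_ge hW hR k) _).trans
    (crossProb_mul_le_measure_firstAbove_succ hW hR k)

theorem IsBM.injOn_gridStop (hW : IsBM P W) (x : ℝ) : InjOn (gridStop W x) (Ici 4) := by
  have key : ∀ R R', 4 ≤ R → R < R' → gridStop W x R ≠ gridStop W x R' := by
    intro R R' hR hRR'
    have hpos : 0 < crossProb * (startProb x * stayProb ^ 0) := by
      simpa using ENNReal.mul_pos crossProb_pos.ne' (startProb_pos x).ne'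
    obtain ⟨ω, hω⟩ := nonempty_of_measure_ne_zero
      (hpos.trans_le (measure_firstAbove_succ_ge hW hR 0)).ne'
    exact gridStop_ne_gridStop (by linarith) hRR' hω
  intro R hR R' hR' h
  by_contra hne
  rcases lt_or_gt_of_ne hne with hlt | hlt
  exacts [key R R' hR hlt h, key R' R hR' hlt h.symm]

theorem Setup.symm (hs : Setup P W₁ W₂) : Setup P W₂ W₁ :=
  ⟨hs.prob, hs.bm₂, hs.bm₁, hs.indep.symm⟩

theorem Setup.measurableSet_firstAbove_inter_staysBelow (hs : Setup P W₁ W₂) (hR : 1 ≤ R)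
    (k : ℕ) : MeasurableSet (firstAbove W₁ x₁ R k ∩ staysBelow W₂ x₂ R k) :=
  (processSigma_le hs.bm₁.meas _
      (natFilt_le_processSigma _ _ (measurableSet_firstAbove hR k))).inter
    (processSigma_le hs.bm₂.meas _
      (natFilt_le_processSigma _ _ (measurableSet_staysBelow hR k)))

theorem Setup.measure_firstAbove_inter_staysBelow_ge (hs : Setup P W₁ W₂) (hR : 4 ≤ R) (k : ℕ) :
    crossProb * (startProb x₁ * stayProb ^ k) * (startProb x₂ * stayProb ^ (k + 1)) ≤
      P (firstAbove W₁ x₁ R (k + 1) ∩ staysBelow W₂ x₂ R (k + 1)) := by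
  have hR1 : 1 ≤ R := by linarith
  rw [(hs.indep.indepSet_of_measurableSet
    (natFilt_le_processSigma _ _ (measurableSet_firstAbove hR1 (k + 1)))
    (natFilt_le_processSigma _ _ (measurableSet_staysBelow hR1 (k + 1)))).measure_inter_eq_mul]
  exact mul_le_mul' (measure_firstAbove_succ_ge hs.bm₁ hR k)
    (measure_staysBelow_ge hs.bm₂ hR (k + 1))

theorem Setup.le_setLIntegral_payoff_gridStop (hs : Setup P W₁ W₂) {f : ℝ → ℝ} {C γ M : ℝ}
    (hC : 0 ≤ C) (hγ : 0 ≤ γ) (hfC : ∀ y ≥ M, C * y ^ γ ≤ f y) (hR : 4 ≤ R)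
    (hRγ : 1 ≤ ENNReal.ofReal (√R ^ γ) * stayProb ^ 2) {k : ℕ} (hM : M ≤ √R ^ (k + 1)) :
    ENNReal.ofReal C * crossProb * startProb x₁ * startProb x₂ ≤
      ∫⁻ ω in firstAbove W₁ x₁ R (k + 1) ∩ staysBelow W₂ x₂ R (k + 1),
        ENNReal.ofReal (payoff f x₁ W₁ (gridStop W₁ x₁ R) (gridStop W₂ x₂ R) ω) ∂P := by
  set ε := ENNReal.ofReal C * crossProb * startProb x₁ * startProb x₂
  set a := ENNReal.ofReal (√R ^ γ)
  have hq : stayProb ^ (2 * (k + 1)) ≤ stayProb ^ (2 * k + 1) :=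
    pow_le_pow_right_of_le_one' prob_le_one (by omega)
  calc ε ≤ ε * (a * stayProb ^ 2) ^ (k + 1) := le_mul_of_one_le_right' (one_le_pow₀ hRγ)
    _ = ε * a ^ (k + 1) * stayProb ^ (2 * (k + 1)) := by ring
    _ ≤ ε * a ^ (k + 1) * stayProb ^ (2 * k + 1) := by gcongr
    _ = ENNReal.ofReal (C * (√R ^ γ) ^ (k + 1)) *
          (crossProb * (startProb x₁ * stayProb ^ k) * (startProb x₂ * stayProb ^ (k + 1))) := by
        rw [ENNReal.ofReal_mul hC, ENNReal.ofReal_pow (by positivity)]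
        ring
    _ ≤ ENNReal.ofReal (C * (√R ^ γ) ^ (k + 1)) *
          P (firstAbove W₁ x₁ R (k + 1) ∩ staysBelow W₂ x₂ R (k + 1)) := by
        gcongr
        exact hs.measure_firstAbove_inter_staysBelow_ge hR k
    _ ≤ _ := by
        rw [← setLIntegral_const]
        exact setLIntegral_mono' (hs.measurableSet_firstAbove_inter_staysBelow (by linarith) _)
          fun ω hω => ENNReal.ofReal_le_ofReal (le_payoff_gridStop (by linarith) hC hγ hfC hM hω)

theorem J_gridStop_eq_top (hs : Setup P W₁ W₂) {f : ℝ → ℝ} (hA1 : A1 f) {C γ M : ℝ}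
    (hC : 0 < C) (hγ : 0 ≤ γ) (hfC : ∀ y ≥ M, C * y ^ γ ≤ f y) (hR : 4 ≤ R)
    (hRγ : 1 ≤ ENNReal.ofReal (√R ^ γ) * stayProb ^ 2) (x₁ x₂ : ℝ) :
    J P f x₁ W₁ (gridStop W₁ x₁ R) (gridStop W₂ x₂ R) = ⊤ := by
  have hdisj : Pairwise (Disjoint on fun k =>
      firstAbove W₁ x₁ R (k + 1) ∩ staysBelow W₂ x₂ R (k + 1)) := fun j k hjk =>
    (pairwise_disjoint_firstAbove (by omega : j + 1 ≠ k + 1)).mono inter_subset_left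
      inter_subset_left
  have hε : ENNReal.ofReal C * crossProb * startProb x₁ * startProb x₂ ≠ 0 :=
    mul_ne_zero (mul_ne_zero (mul_ne_zero (ENNReal.ofReal_pos.mpr hC).ne' crossProb_pos.ne')
      (startProb_pos x₁).ne') (startProb_pos x₂).ne'
  have hM : ∀ᶠ k in atTop, M ≤ √R ^ (k + 1) :=
    ((tendsto_pow_atTop_atTop_of_one_lt ((Real.lt_sqrt zero_le_one).mpr (by linarith))).comp
      (tendsto_add_atTop_nat 1)).eventually_ge_atTop M
  exact EE_eq_top_of_nonneg (payoff_gridStop_nonneg hA1 (by linarith) _)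
    (lintegral_eq_top_of_eventually_le_setLIntegral
      (fun k => hs.measurableSet_firstAbove_inter_staysBelow (by linarith) (k + 1)) hdisj hε
      (hM.mono fun _ hk => hs.le_setLIntegral_payoff_gridStop hC.le hγ hfC hR hRγ hk))

end Strategies

theorem infinitely_many_infinite_payoff_equilibria_general
    {Ω : Type*} [MeasurableSpace Ω] (P : Measure Ω) (W₁ W₂ : ℝ → Ω → ℝ)
    (hs : Setup P W₁ W₂) (f : ℝ → ℝ)
    (hA1 : A1 f) (γ : ℝ) (hγ : 0 < γ) (hA2 : A2 f γ) (x₁ x₂ : ℝ) :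
    {p : (Ω → ℝ≥0∞) × (Ω → ℝ≥0∞) | Nash P f x₁ x₂ W₁ W₂ p.1 p.2 ∧
      J P f x₁ W₁ p.1 p.2 = ⊤ ∧ J P f x₂ W₂ p.2 p.1 = ⊤}.Infinite := by
  have := hs.prob
  obtain ⟨C, hC, M, hfC⟩ := hA2.exists_const_mul_rpow_le
  obtain ⟨R₀, hR₀⟩ := eventually_atTop.mp ((eventually_ge_atTop 4).and
    (eventually_one_le_ofReal_sqrt_rpow_mul hγ (pow_ne_zero 2 stayProb_pos.ne')))
  refine infinite_of_injOn_mapsTo (f := fun R => (gridStop W₁ x₁ R, gridStop W₂ x₂ R))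
    (fun R hR R' hR' h => hs.bm₁.injOn_gridStop x₁ (hR₀ R hR).1 (hR₀ R' hR').1
      (congrArg Prod.fst h)) (fun R hR => ?_) (Ici_infinite R₀)
  obtain ⟨hR4, hRγ⟩ := hR₀ R hR
  have hJ₁ := J_gridStop_eq_top hs hA1 hC hγ.le hfC hR4 hRγ x₁ x₂
  have hJ₂ := J_gridStop_eq_top hs.symm hA1 hC hγ.le hfC hR4 hRγ x₂ x₁
  exact ⟨nash_of_J_eq_top (adm_gridStop hs.bm₁.init hA1 (by linarith))
    (adm_gridStop hs.bm₂.init hA1 (by linarith)) hJ₁ hJ₂, hJ₁, hJ₂⟩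

/-- Theorem 3.1, Part I: under (A1) and (A2) with some exponent `γ > 0`,
for every starting point there exist infinitely many Nash equilibria in which both
players receive infinite expected payoffs. -/
theorem infinitely_many_infinite_payoff_equilibria
    {Ω : Type*} [MeasurableSpace Ω] (P : Measure Ω) (W₁ W₂ : ℝ → Ω → ℝ)
    (hs : Setup P W₁ W₂) (f : ℝ → ℝ) (hf : Measurable f)
    (hA1 : A1 f) (γ : ℝ) (hγ : 0 < γ) (hA2 : A2 f γ) (x₁ x₂ : ℝ) :
    {p : (Ω → ℝ≥0∞) × (Ω → ℝ≥0∞) | Nash P f x₁ x₂ W₁ W₂ p.1 p.2 ∧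
      J P f x₁ W₁ p.1 p.2 = ⊤ ∧ J P f x₂ W₂ p.2 p.1 = ⊤}.Infinite :=
  infinitely_many_infinite_payoff_equilibria_general P W₁ W₂ hs f hA1 γ hγ hA2 x₁ x₂

end DynkinGame
end
end

section
/- (Theorem 3.1, Part IV(b)) Suppose the reward function satisfies (A4), i.e., f(x) = kx for all x ∈ ℝ with some k > 0. Then the pair of trivial stopping times (τ1, τ2) = (0, 0) is a Nash equilibrium of the two-player stopping game started at (x1, x2) if and only if min(x1, x2) ≥ 0. -/
open MeasureTheory ProbabilityTheory Filter Set
open scoped ENNReal Classical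

noncomputable section

namespace DynkinGame

section Pathwise

variable {Ω : Type*} {W : ℝ → Ω → ℝ} (f : ℝ → ℝ) (x : ℝ)

lemma isStopTime_const (c : ℝ≥0∞) : IsStopTime W (fun _ => c) :=
  fun t _ => MeasurableSet.const (c ≤ ENNReal.ofReal t)

lemma payoff_top (σ : Ω → ℝ≥0∞) : payoff f x W (fun _ => ⊤) σ = fun _ => 0 := by
  funext ω
  simp [payoff]

lemma payoff_zero_zero (hW : ∀ ω, W 0 ω = 0) (ω : Ω) :
    payoff f x W (fun _ => 0) (fun _ => 0) ω = f x / 2 := by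
  simp [payoff, stopVal, hW, div_eq_mul_inv]

lemma payoff_le_payoff_zero_zero (hW : ∀ ω, W 0 ω = 0) (hfx : 0 ≤ f x) (σ : Ω → ℝ≥0∞) :
    payoff f x W σ (fun _ => 0) ≤ payoff f x W (fun _ => 0) (fun _ => 0) := by
  intro ω
  rw [payoff_zero_zero f x hW]
  by_cases hσ : σ ω = 0 <;> simp [payoff, stopVal, hσ, hW, div_eq_mul_inv, hfx]

end Pathwise

section Expectation

variable {Ω : Type*} [MeasurableSpace Ω] {P : Measure Ω}

lemma EE_const [IsProbabilityMeasure P] (c : ℝ) : EE P (fun _ => c) = c := by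
  simp only [EE, lintegral_const, measure_univ, mul_one, EReal.coe_ennreal_ofReal]
  rcases le_total 0 c with hc | hc
  · rw [max_eq_left hc, max_eq_right (neg_nonpos.mpr hc)]
    simp
  · rw [max_eq_right hc, max_eq_left (neg_nonneg.mpr hc), ← EReal.coe_sub]
    simp

lemma EE_mono {X Y : Ω → ℝ} (hXY : X ≤ Y) : EE P X ≤ EE P Y :=
  EReal.sub_le_sub
    (by exact_mod_cast lintegral_mono fun ω => ENNReal.ofReal_le_ofReal (hXY ω))
    (by exact_mod_cast lintegral_mono fun ω => ENNReal.ofReal_le_ofReal (neg_le_neg (hXY ω)))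

lemma wellDef_const [IsFiniteMeasure P] (c : ℝ) : WellDef P (fun _ => c) := by
  left
  rw [lintegral_const]
  exact ENNReal.mul_ne_top ENNReal.ofReal_ne_top (measure_ne_top _ _)

variable {W : ℝ → Ω → ℝ} (hW : ∀ ω, W 0 ω = 0) (f : ℝ → ℝ) (x : ℝ)
include hW

/-- Covers both `c = 0` and `c = ∞`: at `τ = ∞`, `stopVal` reads the junk value `W 0 = 0`. -/
lemma adm_const [IsFiniteMeasure P] {c : ℝ≥0∞} (hc : c.toReal = 0) :
    Adm P f x W (fun _ => c) := by
  refine ⟨isStopTime_const c, ?_⟩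
  simpa only [stopVal, hc, hW, add_zero] using wellDef_const (P := P) (f x)

lemma nonneg_of_J_top_le_J_zero_zero [IsProbabilityMeasure P]
    (h : J P f x W (fun _ => ⊤) (fun _ => 0) ≤ J P f x W (fun _ => 0) (fun _ => 0)) :
    0 ≤ f x := by
  rw [J, J, payoff_top, funext (payoff_zero_zero f x hW), EE_const, EE_const] at h
  have : (0 : ℝ) ≤ f x / 2 := by exact_mod_cast h
  linarith

end Expectation

/-- Against an opponent who stops at once, a player's only alternative to sharing `f x / 2`
is never to be first, which pays `0`. -/
theorem nash_zero_zero_iff {Ω : Type*} [MeasurableSpace Ω] {P : Measure Ω}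
    [IsProbabilityMeasure P] {W₁ W₂ : ℝ → Ω → ℝ} (hW₁ : ∀ ω, W₁ 0 ω = 0)
    (hW₂ : ∀ ω, W₂ 0 ω = 0) (f : ℝ → ℝ) (x₁ x₂ : ℝ) :
    Nash P f x₁ x₂ W₁ W₂ (fun _ => 0) (fun _ => 0) ↔ 0 ≤ f x₁ ∧ 0 ≤ f x₂ := by
  constructor
  · rintro ⟨-, -, h₁, h₂⟩
    exact ⟨nonneg_of_J_top_le_J_zero_zero hW₁ f x₁ (h₁ _ (adm_const hW₁ f x₁ rfl)),
      nonneg_of_J_top_le_J_zero_zero hW₂ f x₂ (h₂ _ (adm_const hW₂ f x₂ rfl))⟩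
  · rintro ⟨hf₁, hf₂⟩
    exact ⟨adm_const hW₁ f x₁ rfl, adm_const hW₂ f x₂ rfl,
      fun σ _ => EE_mono (payoff_le_payoff_zero_zero f x₁ hW₁ hf₁ σ),
      fun σ _ => EE_mono (payoff_le_payoff_zero_zero f x₂ hW₂ hf₂ σ)⟩

/-- Theorem 3.1, Part IV(b): under (A4) (`f(x) = kx`, `k > 0`), the pair of
trivial stopping times `(0, 0)` is a Nash equilibrium started at `(x₁, x₂)` if and only
if `min (x₁, x₂) ≥ 0`. -/
theorem trivial_pair_equilibrium_iff
    {Ω : Type*} [MeasurableSpace Ω] (P : Measure Ω) (W₁ W₂ : ℝ → Ω → ℝ)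
    (hs : Setup P W₁ W₂) (f : ℝ → ℝ) (k : ℝ) (hk : 0 < k)
    (hA4 : ∀ x : ℝ, f x = k * x) (x₁ x₂ : ℝ) :
    Nash P f x₁ x₂ W₁ W₂ (fun _ => 0) (fun _ => 0) ↔ 0 ≤ min x₁ x₂ := by
  have := hs.prob
  rw [nash_zero_zero_iff hs.bm₁.init hs.bm₂.init, hA4, hA4, mul_nonneg_iff_of_pos_left hk,
    mul_nonneg_iff_of_pos_left hk, le_min_iff]

end DynkinGame
end
end

section
/- Let W be a standard Brownian motion with natural filtration (F_t), let c: [0,∞] → [0,1] be nonincreasing with c(∞) = 0, let k > 0 and fix t ≥ 0. For s ≥ 0 set B_s := W_{t+s} − W_t (a standard Brownian motion independent of F_t). Suppose x ∈ ℝ is such that k·x·c(t) ≥ E[ k·(x + B_τ)·c(t + τ) ] for every stopping time τ of B for which the right-hand side is well defined. Then for every y > x, one also has k·y·c(t) ≥ E[ k·(y + B_τ)·c(t + τ) ] for every such stopping time τ. -/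
open MeasureTheory ProbabilityTheory Filter Set
open scoped ENNReal Classical

noncomputable section

/-!
The gain from starting higher is deterministic up to the discount: stopping at `τ` from `y`
instead of `x` adds `k (y - x) c(t + τ) ≤ k (y - x) c(t)`, because `c` is nonincreasing. Hence
`E[k (y + B_τ) c(t + τ)] ≤ E[k (x + B_τ) c(t + τ)] + k (y - x) c(t) ≤ k y c(t)`. The only
analytic input is that `B_τ` is a random variable, which holds since `B` has continuous paths.
-/

namespace DynkinGame

section

variable {Ω : Type*} [MeasurableSpace Ω]

theorem natFilt_le {W : ℝ → Ω → ℝ} (hW : ∀ s, Measurable (W s)) (t : ℝ) :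
    natFilt W t ≤ ‹MeasurableSpace Ω› :=
  iSup₂_le fun s _ => (hW s).comap_le

theorem IsStopTime.measurable {W : ℝ → Ω → ℝ} {τ : Ω → ℝ≥0∞} (hτ : IsStopTime W τ)
    (hW : ∀ s, Measurable (W s)) : Measurable τ := by
  refine measurable_of_Iic fun u => ?_
  rcases eq_or_ne u ⊤ with rfl | hu
  · simp
  · have h := natFilt_le hW _ _ (hτ u.toReal ENNReal.toReal_nonneg)
    rwa [ENNReal.ofReal_toReal hu] at h

-- Off a measurable null set the paths are continuous, and there `(s, ω) ↦ W s ω` is jointly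
-- measurable.
theorem aemeasurable_stopVal {P : Measure Ω} {W : ℝ → Ω → ℝ} (hW : ∀ s, Measurable (W s))
    (hcont : ∀ᵐ ω ∂P, Continuous fun s => W s ω) {τ : Ω → ℝ≥0∞} (hτ : Measurable τ) :
    AEMeasurable (stopVal W τ) P := by
  obtain ⟨N, hN, hNmeas, hN0⟩ := exists_measurable_superset_of_null (ae_iff.1 hcont)
  set W' : ℝ → Ω → ℝ := fun s => Nᶜ.indicator (W s)
  have hW'cont : ∀ ω, Continuous fun s => W' s ω := by
    intro ω
    by_cases hω : ω ∈ N
    · simpa [W', hω] using continuous_const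
    · simpa [W', hω] using not_not.1 (mt (@hN ω) hω)
  have hW'meas : Measurable fun ω => W' (τ ω).toReal ω :=
    (measurable_uncurry_of_continuous_of_measurable hW'cont
      fun s => (hW s).indicator hNmeas.compl).comp (hτ.ennreal_toReal.prodMk measurable_id)
  refine hW'meas.aemeasurable.congr ?_
  filter_upwards [measure_eq_zero_iff_ae_notMem.1 hN0] with ω hω
  simp [W', stopVal, hω]

theorem EE_eq_bot_of_not_wellDef {P : Measure Ω} {X : Ω → ℝ} (hX : ¬ WellDef P X) :
    EE P X = ⊥ := by
  simp only [WellDef, not_or, not_not] at hX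
  simp [EE, hX.1, hX.2]

theorem integrable_of_lintegral_ofReal_ne_top {P : Measure Ω} {X : Ω → ℝ}
    (hX : AEMeasurable X P) (hpos : ∫⁻ ω, ENNReal.ofReal (X ω) ∂P ≠ ⊤)
    (hneg : ∫⁻ ω, ENNReal.ofReal (-X ω) ∂P ≠ ⊤) : Integrable X P := by
  have h := (integrable_toReal_of_lintegral_ne_top hX.ennreal_ofReal hpos).sub
    (integrable_toReal_of_lintegral_ne_top hX.neg.ennreal_ofReal hneg)
  refine h.congr (Eventually.of_forall fun ω => ?_)
  simp [ENNReal.toReal_ofReal', max_zero_sub_max_neg_zero_eq_self]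

theorem EE_eq_integral {P : Measure Ω} {X : Ω → ℝ} (hX : Integrable X P) :
    EE P X = ↑(∫ ω, X ω ∂P) := by
  have hneg : ∫⁻ ω, ENNReal.ofReal (-X ω) ∂P ≠ ⊤ := hX.neg.lintegral_lt_top.ne
  rw [integral_eq_lintegral_pos_part_sub_lintegral_neg_part hX, EReal.coe_sub,
    EReal.coe_ennreal_toReal hX.lintegral_lt_top.ne,
    EReal.coe_ennreal_toReal hneg]
  rfl

theorem lintegral_ofReal_le_add_of_le {P : Measure Ω} [IsProbabilityMeasure P] {f g : Ω → ℝ}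
    {C : ℝ} (h : ∀ ω, f ω ≤ g ω + C) :
    ∫⁻ ω, ENNReal.ofReal (f ω) ∂P ≤ ∫⁻ ω, ENNReal.ofReal (g ω) ∂P + ENNReal.ofReal C :=
  calc ∫⁻ ω, ENNReal.ofReal (f ω) ∂P ≤ ∫⁻ ω, (ENNReal.ofReal (g ω) + ENNReal.ofReal C) ∂P :=
        lintegral_mono fun ω => (ENNReal.ofReal_le_ofReal (h ω)).trans ENNReal.ofReal_add_le
    _ = ∫⁻ ω, ENNReal.ofReal (g ω) ∂P + ENNReal.ofReal C := by
        rw [lintegral_add_right _ measurable_const, lintegral_const, measure_univ, mul_one]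

theorem EE_le_add_of_le {P : Measure Ω} [IsProbabilityMeasure P] {X Y : Ω → ℝ}
    (hX : AEMeasurable X P) (hY : AEMeasurable Y P) {C : ℝ} (h : ∀ ω, Y ω ≤ X ω + C) :
    EE P Y ≤ EE P X + C := by
  by_cases hYneg : ∫⁻ ω, ENNReal.ofReal (-Y ω) ∂P = ⊤
  · simp [EE, hYneg]
  have hXneg : ∫⁻ ω, ENNReal.ofReal (-X ω) ∂P ≠ ⊤ :=
    ne_top_of_le_ne_top (by finiteness)
      (lintegral_ofReal_le_add_of_le (P := P) fun ω => by linarith [h ω])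
  by_cases hXpos : ∫⁻ ω, ENNReal.ofReal (X ω) ∂P = ⊤
  · have hEX : EE P X = ⊤ := by
      rw [EE, hXpos, ← EReal.coe_ennreal_toReal hXneg]
      exact EReal.top_sub_coe _
    simp [hEX]
  have hYpos : ∫⁻ ω, ENNReal.ofReal (Y ω) ∂P ≠ ⊤ :=
    ne_top_of_le_ne_top (by finiteness) (lintegral_ofReal_le_add_of_le (P := P) h)
  have hXint := integrable_of_lintegral_ofReal_ne_top hX hXpos hXneg
  have hYint := integrable_of_lintegral_ofReal_ne_top hY hYpos hYneg
  rw [EE_eq_integral hXint, EE_eq_integral hYint, ← EReal.coe_add, EReal.coe_le_coe_iff]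
  calc ∫ ω, Y ω ∂P ≤ ∫ ω, (X ω + C) ∂P := integral_mono hYint (hXint.add (integrable_const C)) h
    _ = ∫ ω, X ω ∂P + C := by simp [integral_add hXint (integrable_const C)]

end

theorem stopping_region_upward_closed_general
    {Ω : Type*} [MeasurableSpace Ω] (P : Measure Ω) [IsProbabilityMeasure P]
    (W : ℝ → Ω → ℝ) (hW : IsBM P W)
    (c : ℝ≥0∞ → ℝ) (hc : Antitone c)
    (k : ℝ) (hk : 0 < k) (t : ℝ)
    (B : ℝ → Ω → ℝ) (hB : B = fun s ω => W (t + s) ω - W t ω)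
    (x : ℝ)
    (hx : ∀ τ : Ω → ℝ≥0∞, IsStopTime B τ →
      WellDef P (fun ω => k * (x + stopVal B τ ω) * c (ENNReal.ofReal t + τ ω)) →
      EE P (fun ω => k * (x + stopVal B τ ω) * c (ENNReal.ofReal t + τ ω)) ≤
        ((k * x * c (ENNReal.ofReal t) : ℝ) : EReal)) :
    ∀ y : ℝ, x < y → ∀ τ : Ω → ℝ≥0∞, IsStopTime B τ →
      WellDef P (fun ω => k * (y + stopVal B τ ω) * c (ENNReal.ofReal t + τ ω)) →
      EE P (fun ω => k * (y + stopVal B τ ω) * c (ENNReal.ofReal t + τ ω)) ≤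
        ((k * y * c (ENNReal.ofReal t) : ℝ) : EReal) := by
  intro y hxy τ hτ _
  have hBmeas : ∀ s, Measurable (B s) := fun s => hB ▸ (hW.meas (t + s)).sub (hW.meas t)
  have hBcont : ∀ᵐ ω ∂P, Continuous fun s => B s ω := by
    filter_upwards [hW.cont] with ω hω
    subst hB
    exact (hω.comp (continuous_const_add t)).sub continuous_const
  have hτm := hτ.measurable hBmeas
  have hpayoff (z : ℝ) :
      AEMeasurable (fun ω => k * (z + stopVal B τ ω) * c (ENNReal.ofReal t + τ ω)) P :=
    ((aemeasurable_const.add (aemeasurable_stopVal hBmeas hBcont hτm)).const_mul k).mul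
      (hc.measurable.comp (measurable_const.add hτm)).aemeasurable
  have hgain (ω : Ω) : k * (y + stopVal B τ ω) * c (ENNReal.ofReal t + τ ω) ≤
      k * (x + stopVal B τ ω) * c (ENNReal.ofReal t + τ ω) +
        k * (y - x) * c (ENNReal.ofReal t) := by
    have hdisc := mul_le_mul_of_nonneg_left (hc (le_self_add : ENNReal.ofReal t ≤ _ + τ ω))
      (mul_nonneg hk.le (sub_nonneg.2 hxy.le))
    linear_combination hdisc
  have hxEE : EE P (fun ω => k * (x + stopVal B τ ω) * c (ENNReal.ofReal t + τ ω)) ≤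
      ((k * x * c (ENNReal.ofReal t) : ℝ) : EReal) := by
    by_cases hwd : WellDef P (fun ω => k * (x + stopVal B τ ω) * c (ENNReal.ofReal t + τ ω))
    · exact hx τ hτ hwd
    · rw [EE_eq_bot_of_not_wellDef hwd]
      exact bot_le
  calc _ ≤ _ + ((k * (y - x) * c (ENNReal.ofReal t) : ℝ) : EReal) :=
        EE_le_add_of_le (hpayoff x) (hpayoff y) hgain
    _ ≤ ((k * x * c (ENNReal.ofReal t) : ℝ) : EReal) +
          ((k * (y - x) * c (ENNReal.ofReal t) : ℝ) : EReal) := by gcongr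
    _ = _ := by rw [← EReal.coe_add]; ring_nf

/-- monotonicity of the stopping region for the linear-reward discounted
problem: if immediate stopping at the space-time point `(x, t)` dominates every stopping
time of the post-`t` Brownian motion `B_s = W_{t+s} - W_t`, then the same holds at
`(y, t)` for every `y > x`. -/
theorem stopping_region_upward_closed
    {Ω : Type*} [MeasurableSpace Ω] (P : Measure Ω) [IsProbabilityMeasure P]
    (W : ℝ → Ω → ℝ) (hW : IsBM P W)
    (c : ℝ≥0∞ → ℝ) (hc : Antitone c) (hc01 : ∀ s, c s ∈ Set.Icc (0 : ℝ) 1)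
    (hctop : c ⊤ = 0)
    (k : ℝ) (hk : 0 < k) (t : ℝ) (ht : 0 ≤ t)
    (B : ℝ → Ω → ℝ) (hB : B = fun s ω => W (t + s) ω - W t ω)
    (x : ℝ)
    (hx : ∀ τ : Ω → ℝ≥0∞, IsStopTime B τ →
      WellDef P (fun ω => k * (x + stopVal B τ ω) * c (ENNReal.ofReal t + τ ω)) →
      EE P (fun ω => k * (x + stopVal B τ ω) * c (ENNReal.ofReal t + τ ω)) ≤
        ((k * x * c (ENNReal.ofReal t) : ℝ) : EReal)) :
    ∀ y : ℝ, x < y → ∀ τ : Ω → ℝ≥0∞, IsStopTime B τ →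
      WellDef P (fun ω => k * (y + stopVal B τ ω) * c (ENNReal.ofReal t + τ ω)) →
      EE P (fun ω => k * (y + stopVal B τ ω) * c (ENNReal.ofReal t + τ ω)) ≤
        ((k * y * c (ENNReal.ofReal t) : ℝ) : EReal) :=
  stopping_region_upward_closed_general P W hW c hc k hk t B hB x hx

end DynkinGame
end
end
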